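/- arXiv:2108.02101 — 3 statements merged into one kernel-verified Lean document; each statement's English description precedes it below -/
import Mathlib

section
/- Let X be a random variable with 0 < E[X^β] < ∞, and for u ≥ 0 let Z(u) be distributed as [X | X ≥ u] (the case α = β of the record transform). For an independent copy X of X, Z(X) denotes the mixture ∫ P[X ∈ · | X ≥ u] dπ(u) where π is the law of X. Then for all t: P[Z(X) ≥ t] ≤ P[X ≥ t]·(1 − log P[X ≥ t]). -/
/-!
Write `G u = μ [u, ∞)` and `p = G t`. The integrand is `1` on `[t, ∞)` and `p / G u` below `t`,
so everything reduces to `∫_{u < t} dμ(u) / G u ≤ -log p`. Since `G` is antitone, `G(X)` is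
stochastically larger than a uniform variable: `μ {G < c} ≤ c`, and restricted to `{u < t}` even
`≤ c - p`. By the layer-cake formula the integral of `1 / G` is then dominated by
`∫₀^∞ min (1 - p) (1/r - p) dr = (1 - p) + (log (1/p) - (1 - p)) = -log p`.
-/

open MeasureTheory Set

lemma measurable_measure_Ici (μ : Measure ℝ) : Measurable fun u => μ (Ici u) :=
  Antitone.measurable fun _ _ h => measure_mono (Ici_subset_Ici.mpr h)

lemma measure_setOf_measure_Ici_lt_le (μ : Measure ℝ) [IsFiniteMeasure μ] (c : ENNReal) :
    μ {u | μ (Ici u) < c} ≤ c := by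
  have hA : MeasurableSet {u | μ (Ici u) < c} := measurable_measure_Ici μ measurableSet_Iio
  -- by inner regularity; a compact subset lies above its minimum, which is in the set
  rw [hA.measure_eq_iSup_isCompact]
  refine iSup₂_le fun K hKA => iSup_le fun hK => ?_
  rcases K.eq_empty_or_nonempty with rfl | hne
  · simp
  · exact (measure_mono fun u hu => csInf_le hK.bddBelow hu).trans (hKA (hK.sInf_mem hne)).le

lemma measure_Iio_inter_setOf_measure_Ici_lt_le (μ : Measure ℝ) [IsFiniteMeasure μ] (t : ℝ)
    (c : ENNReal) : μ (Iio t ∩ {u | μ (Ici u) < c}) ≤ c - μ (Ici t) := by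
  by_cases hc : μ (Ici t) < c
  · have hsub : Ici t ⊆ {u | μ (Ici u) < c} := fun u hu =>
      (measure_mono (Ici_subset_Ici.mpr hu)).trans_lt hc
    have hdisj : Disjoint (Iio t ∩ {u | μ (Ici u) < c}) (Ici t) :=
      (Iio_disjoint_Ici le_rfl).mono_left inter_subset_left
    refine ENNReal.le_sub_of_add_le_right (measure_ne_top μ _) ?_
    rw [← measure_union hdisj measurableSet_Ici]
    exact (measure_mono (union_subset inter_subset_right hsub)).trans
      (measure_setOf_measure_Ici_lt_le μ c)
  · have hempty : Iio t ∩ {u | μ (Ici u) < c} = ∅ := eq_empty_of_forall_notMem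
      fun u ⟨hut, hu⟩ => hc ((measure_mono (Ici_subset_Ici.mpr (le_of_lt hut))).trans_lt hu)
    simp [hempty]

lemma lintegral_Ioi_ofReal_min_inv_sub {p : ℝ} (hp₀ : 0 < p) (hp₁ : p ≤ 1) :
    ∫⁻ r in Ioi 0, ENNReal.ofReal (min (1 - p) (r⁻¹ - p)) = ENNReal.ofReal (-Real.log p) := by
  have hp : 1 ≤ p⁻¹ := (one_le_inv₀ hp₀).mpr hp₁
  rw [← Ioc_union_Ioi_eq_Ioi zero_le_one, lintegral_union measurableSet_Ioi
      (Ioc_disjoint_Ioi le_rfl), ← Ioc_union_Ioi_eq_Ioi hp, lintegral_union measurableSet_Ioi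
      (Ioc_disjoint_Ioi le_rfl)]
  have hsmall :
      ∫⁻ r in Ioc 0 1, ENNReal.ofReal (min (1 - p) (r⁻¹ - p)) = ENNReal.ofReal (1 - p) := by
    rw [setLIntegral_congr_fun measurableSet_Ioc fun r hr => by
      rw [min_eq_left (by linarith [(one_le_inv₀ hr.1).mpr hr.2])]]
    simp
  have hmiddle : ∫⁻ r in Ioc 1 p⁻¹, ENNReal.ofReal (min (1 - p) (r⁻¹ - p))
      = ENNReal.ofReal (-Real.log p - (1 - p)) := by
    have hinv : IntervalIntegrable (fun r : ℝ => r⁻¹) volume 1 p⁻¹ :=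
      intervalIntegrable_inv_iff.mpr (Or.inr fun h => by rw [uIcc_of_le hp] at h; linarith [h.1])
    have hval : ∫ r in (1 : ℝ)..p⁻¹, (r⁻¹ - p) = -Real.log p - (1 - p) := by
      rw [intervalIntegral.integral_sub hinv intervalIntegrable_const,
        integral_inv_of_pos one_pos (inv_pos.mpr hp₀), intervalIntegral.integral_const, div_one,
        Real.log_inv, smul_eq_mul, sub_mul, inv_mul_cancel₀ hp₀.ne']
      ring
    rw [setLIntegral_congr_fun measurableSet_Ioc fun r hr => by
        rw [min_eq_right (by linarith [inv_le_one_of_one_le₀ hr.1.le])],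
      ← ofReal_integral_eq_lintegral_ofReal
        ((intervalIntegrable_iff_integrableOn_Ioc_of_le hp).mp (hinv.sub intervalIntegrable_const))
        ((ae_restrict_iff' measurableSet_Ioc).mpr (ae_of_all _ fun r hr =>
          sub_nonneg.mpr ((le_inv_comm₀ hp₀ (one_pos.trans hr.1)).mpr hr.2))),
      ← intervalIntegral.integral_of_le hp, hval]
  have hlarge : ∫⁻ r in Ioi p⁻¹, ENNReal.ofReal (min (1 - p) (r⁻¹ - p)) = 0 := by
    rw [setLIntegral_congr_fun measurableSet_Ioi (g := fun _ => 0) fun r (hr : p⁻¹ < r) =>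
      ENNReal.ofReal_eq_zero.mpr ((min_le_right _ _).trans (sub_nonpos.mpr
        ((inv_lt_comm₀ ((inv_pos.mpr hp₀).trans hr) hp₀).mpr hr).le)), lintegral_zero]
  rw [hsmall, hmiddle, hlarge, add_zero, ← ENNReal.ofReal_add (by linarith)
    (by linarith [Real.log_le_sub_one_of_pos hp₀])]
  ring_nf

theorem setIntegral_Iio_inv_measure_Ici_le_neg_log (μ : Measure ℝ) [IsProbabilityMeasure μ]
    {t : ℝ} (ht : 0 < μ (Ici t)) :
    ∫ u in Iio t, (μ (Ici u)).toReal⁻¹ ∂μ ≤ -Real.log (μ (Ici t)).toReal := by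
  set p := (μ (Ici t)).toReal
  have hp₀ : 0 < p := ENNReal.toReal_pos ht.ne' (measure_ne_top μ _)
  have hp₁ : p ≤ 1 := measureReal_le_one
  have hf : Measurable fun u => (μ (Ici u)).toReal⁻¹ :=
    (measurable_measure_Ici μ).ennreal_toReal.inv
  have hf₀ : 0 ≤ᵐ[μ.restrict (Iio t)] fun u => (μ (Ici u)).toReal⁻¹ :=
    ae_of_all _ fun _ => by positivity
  have hlevel : ∀ r ∈ Ioi (0 : ℝ), μ.restrict (Iio t) {u | r < (μ (Ici u)).toReal⁻¹}
      ≤ ENNReal.ofReal (min (1 - p) (r⁻¹ - p)) := by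
    intro r (hr : 0 < r)
    rw [Measure.restrict_apply (measurableSet_lt measurable_const hf), ENNReal.ofReal_min,
      le_min_iff, ENNReal.ofReal_sub _ hp₀.le, ENNReal.ofReal_sub _ hp₀.le,
      ENNReal.ofReal_toReal (measure_ne_top μ _), ENNReal.ofReal_one]
    constructor
    · rw [← prob_compl_eq_one_sub measurableSet_Ici, compl_Ici]
      exact measure_mono inter_subset_right
    · refine (measure_mono ?_).trans (measure_Iio_inter_setOf_measure_Ici_lt_le μ t _)
      rintro u ⟨hu : r < (μ (Ici u)).toReal⁻¹, hut⟩
      refine ⟨hut, ?_⟩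
      have hGu : 0 < (μ (Ici u)).toReal := inv_pos.mp (hr.trans hu)
      exact (ENNReal.lt_ofReal_iff_toReal_lt (measure_ne_top μ _)).mpr
        ((lt_inv_comm₀ hr hGu).mp hu)
  rw [integral_eq_lintegral_of_nonneg_ae hf₀ hf.aestronglyMeasurable]
  refine ENNReal.toReal_le_of_le_ofReal (neg_nonneg.mpr (Real.log_nonpos hp₀.le hp₁)) ?_
  calc ∫⁻ u in Iio t, ENNReal.ofReal (μ (Ici u)).toReal⁻¹ ∂μ
      = ∫⁻ r in Ioi 0, μ.restrict (Iio t) {u | r < (μ (Ici u)).toReal⁻¹} :=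
        lintegral_eq_lintegral_meas_lt _ hf₀ hf.aemeasurable
    _ ≤ ∫⁻ r in Ioi 0, ENNReal.ofReal (min (1 - p) (r⁻¹ - p)) :=
        setLIntegral_mono' measurableSet_Ioi hlevel
    _ = ENNReal.ofReal (-Real.log p) := lintegral_Ioi_ofReal_min_inv_sub hp₀ hp₁

theorem stmt8_general (μ : Measure ℝ) [IsProbabilityMeasure μ]
    (t : ℝ) (hpos : 0 < μ (Set.Ici t)) :
    ∫ u, (if t ≤ u then (1 : ℝ) else (μ (Set.Ici t)).toReal / (μ (Set.Ici u)).toReal) ∂μ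
      ≤ (μ (Set.Ici t)).toReal * (1 - Real.log (μ (Set.Ici t)).toReal) := by
  set p := (μ (Ici t)).toReal
  have hp₀ : 0 < p := ENNReal.toReal_pos hpos.ne' (measure_ne_top μ _)
  have hint : Integrable (fun u => if t ≤ u then (1 : ℝ) else p / (μ (Ici u)).toReal) μ := by
    refine Integrable.of_bound (measurable_const.ite measurableSet_Ici
      (measurable_const.div (measurable_measure_Ici μ).ennreal_toReal)).aestronglyMeasurable 1
      (ae_of_all _ fun u => ?_)
    split_ifs with hu
    · simp
    · have hpu : p ≤ (μ (Ici u)).toReal := ENNReal.toReal_mono (measure_ne_top μ _)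
        (measure_mono (Ici_subset_Ici.mpr (not_le.mp hu).le))
      rw [Real.norm_of_nonneg (by positivity)]
      exact div_le_one_of_le₀ hpu ENNReal.toReal_nonneg
  rw [← integral_add_compl measurableSet_Ici hint, compl_Ici,
    setIntegral_congr_fun measurableSet_Ici fun u (hu : t ≤ u) => if_pos hu,
    setIntegral_congr_fun measurableSet_Iio fun u (hu : u < t) => if_neg (not_le.mpr hu)]
  simp only [div_eq_mul_inv, integral_const_mul, setIntegral_const, smul_eq_mul, mul_one]
  have hkey := mul_le_mul_of_nonneg_left (setIntegral_Iio_inv_measure_Ici_le_neg_log μ hpos) hp₀.le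
  rw [measureReal_def]
  linarith

/-- Record-transform bound: with `Z(u) ~ [X | X ≥ u]` and `Z(X)` the mixture over an
independent copy of `X`, `P[Z(X) ≥ t] ≤ P[X ≥ t]·(1 - log P[X ≥ t])`.
Here `P[Z(X) ≥ t] = ∫ (1{u ≥ t} + 1{u < t}·P[X ≥ t]/P[X ≥ u]) dμ(u)`. -/
theorem stmt8 (μ : Measure ℝ) [IsProbabilityMeasure μ] (hsupp : μ (Set.Iio 0) = 0)
    (t : ℝ) (hpos : 0 < μ (Set.Ici t)) :
    ∫ u, (if t ≤ u then (1 : ℝ) else (μ (Set.Ici t)).toReal / (μ (Set.Ici u)).toReal) ∂μ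
      ≤ (μ (Set.Ici t)).toReal * (1 - Real.log (μ (Set.Ici t)).toReal) :=
  stmt8_general μ t hpos
end

section
/- Suppose X is a nonnegative random variable with E[X^β] = 1 (taking α = β), and its (β,β)-generalized equilibrium transform X* satisfies P[X* > t] ≤ P[X > t]/p for all t, where p ∈ (0,1]. Then for all t > 0: P[X ≥ t] ≤ e^{1 − p t^β}. -/
/-!
Write `H v = E[(X ^ β - v)⁺]`. Since `E[X ^ β] = 1`, the tail of the equilibrium transform is
`P[X* > u] = H (u ^ β)`, so the hypothesis reads `p H w ≤ P[X ^ β ≥ w]`. Together with Markov's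
inequality `(w - v) P[X ^ β ≥ w] + H w ≤ H v` this gives `H w (1 + p (w - v)) ≤ H v`; iterating
along `n` equal steps from `0` to `v` and letting `n → ∞` yields `H v ≤ e^(-p v) H 0 = e^(-p v)`.
A last Markov step from `v = t ^ β - 1 / p` (the level minimising `e^(-p v) / (t ^ β - v)`) to
`t ^ β` gives `P[X ≥ t] ≤ p H v ≤ e^(1 - p t ^ β)`.
-/

open MeasureTheory

/-- The law of `V_a`, with density `a x^(a-1)` on `(0,1]`. -/
noncomputable def vLaw (a : ℝ) : Measure ℝ :=
  (volume.restrict (Set.Ioc (0 : ℝ) 1)).withDensity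
    (fun u => ENNReal.ofReal (a * u ^ (a - 1)))

/-- The `β`-power bias of a law `μ`. -/
noncomputable def powerBias (β : ℝ) (μ : Measure ℝ) : Measure ℝ :=
  μ.withDensity (fun x => ENNReal.ofReal (x ^ β / ∫ y, y ^ β ∂μ))

/-- The `(α,β)`-generalized equilibrium transform of `μ`: the law of `V_α · X^(β)`. -/
noncomputable def eqLaw (α β : ℝ) (μ : Measure ℝ) : Measure ℝ :=
  ((vLaw α).prod (powerBias β μ)).map (fun p => p.1 * p.2)

section StopLoss

variable {Ω : Type*} [MeasurableSpace Ω] {μ : Measure Ω} {Y : Ω → ℝ}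

noncomputable def stopLoss (μ : Measure Ω) (Y : Ω → ℝ) (v : ℝ) : ℝ :=
  ∫ ω, max (Y ω - v) 0 ∂μ

lemma stopLoss_nonneg (v : ℝ) : 0 ≤ stopLoss μ Y v :=
  integral_nonneg fun _ => le_max_right _ _

lemma stopLoss_zero (hY : 0 ≤ᵐ[μ] Y) : stopLoss μ Y 0 = ∫ ω, Y ω ∂μ :=
  integral_congr_ae <| hY.mono fun ω (hω : 0 ≤ Y ω) => by simp [hω]

lemma integrable_max_sub_const [IsFiniteMeasure μ] (hY : Integrable Y μ) (v : ℝ) :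
    Integrable (fun ω => max (Y ω - v) 0) μ :=
  (hY.sub (integrable_const v)).pos_part

lemma sub_mul_measureReal_add_stopLoss_le [IsFiniteMeasure μ] (hYm : Measurable Y)
    (hY : Integrable Y μ) {v w : ℝ} (hvw : v ≤ w) :
    (w - v) * μ.real {ω | w ≤ Y ω} + stopLoss μ Y w ≤ stopLoss μ Y v := by
  have hset : MeasurableSet {ω | w ≤ Y ω} := measurableSet_le measurable_const hYm
  have hpointwise : ∀ ω, {ω | w ≤ Y ω}.indicator (fun _ => w - v) ω + max (Y ω - w) 0
      ≤ max (Y ω - v) 0 := by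
    intro ω
    by_cases hω : w ≤ Y ω
    · rw [Set.indicator_of_mem (show ω ∈ {ω | w ≤ Y ω} from hω), max_eq_left (by linarith),
        max_eq_left (by linarith)]
      linarith
    · rw [Set.indicator_of_notMem (show ω ∉ {ω | w ≤ Y ω} from hω), zero_add]
      exact max_le_max (by linarith) le_rfl
  have hind : Integrable ({ω | w ≤ Y ω}.indicator fun _ => w - v) μ :=
    (integrable_const _).indicator hset
  have := integral_mono (hind.add (integrable_max_sub_const hY w))
    (integrable_max_sub_const hY v) hpointwise
  rwa [integral_add' hind (integrable_max_sub_const hY w), integral_indicator_const _ hset,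
    smul_eq_mul, mul_comm] at this

end StopLoss

lemma mul_exp_le_of_mul_one_add_le {G : ℝ → ℝ} {p : ℝ} (hp : 0 ≤ p)
    (hG : ∀ v δ, 0 ≤ v → 0 < δ → G (v + δ) * (1 + p * δ) ≤ G v) {w : ℝ} (hw : 0 < w) :
    G w * Real.exp (p * w) ≤ G 0 := by
  have hiter : ∀ (k : ℕ) {v δ : ℝ}, 0 ≤ v → 0 < δ → G (v + k * δ) * (1 + p * δ) ^ k ≤ G v := by
    intro k
    induction k with
    | zero => intro v δ _ _; simp
    | succ k ih =>
      intro v δ hv hδ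
      calc G (v + ↑(k + 1) * δ) * (1 + p * δ) ^ (k + 1)
          = G (v + δ + k * δ) * (1 + p * δ) ^ k * (1 + p * δ) := by push_cast; ring_nf
        _ ≤ G (v + δ) * (1 + p * δ) :=
          mul_le_mul_of_nonneg_right (ih (by positivity) hδ) (by positivity)
        _ ≤ G v := hG v δ hv hδ
  have hlim := (Real.tendsto_one_add_div_pow_exp (p * w)).const_mul (G w)
  refine le_of_tendsto hlim ?_
  filter_upwards [Filter.eventually_ge_atTop 1] with n hn
  have hn0 : (0 : ℝ) < n := by exact_mod_cast hn
  have := hiter n le_rfl (div_pos hw hn0)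
  rwa [zero_add, mul_div_cancel₀ _ hn0.ne', ← mul_div_assoc] at this

lemma ae_le_of_measure_Iio_eq_zero {μ : Measure ℝ} {a : ℝ} (h : μ (Set.Iio a) = 0) :
    ∀ᵐ x ∂μ, a ≤ x :=
  (measure_eq_zero_iff_ae_notMem.1 h).mono fun _ hx => not_lt.1 hx

instance (a : ℝ) : SFinite (vLaw a) := by unfold vLaw; infer_instance

lemma vLaw_Ioi {β c : ℝ} (hβ : 0 < β) (hc : 0 ≤ c) :
    vLaw β (Set.Ioi c) = ENNReal.ofReal (1 - c ^ β) := by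
  rw [vLaw, withDensity_apply _ measurableSet_Ioi, Measure.restrict_restrict measurableSet_Ioi,
    Set.inter_comm, Set.Ioc_inter_Ioi, sup_eq_right.2 hc]
  rcases le_total c 1 with hc1 | hc1
  · have hdens : IntervalIntegrable (fun v : ℝ => β * v ^ (β - 1)) volume c 1 :=
      (intervalIntegral.intervalIntegrable_rpow' (by linarith)).const_mul β
    rw [← ofReal_integral_eq_lintegral_ofReal
      ((intervalIntegrable_iff_integrableOn_Ioc_of_le hc1).1 hdens)]
    · rw [← intervalIntegral.integral_of_le hc1, intervalIntegral.integral_const_mul,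
        integral_rpow (Or.inl (by linarith)), sub_add_cancel, Real.one_rpow]
      field_simp
    · filter_upwards [self_mem_ae_restrict measurableSet_Ioc] with v hv
      have : 0 < v := hc.trans_lt hv.1
      positivity
  · have : 1 ≤ c ^ β := Real.one_le_rpow hc1 hβ.le
    rw [Set.Ioc_eq_empty (by simpa using hc1), ENNReal.ofReal_of_nonpos (by linarith)]
    simp

lemma ofReal_rpow_mul_vLaw {β u x : ℝ} (hβ : 0 < β) (hu : 0 < u) (hx : 0 ≤ x) :
    ENNReal.ofReal (x ^ β) * vLaw β {v | u < v * x} = ENNReal.ofReal (x ^ β - u ^ β) := by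
  rcases hx.eq_or_lt with rfl | hx
  · simp [Real.zero_rpow hβ.ne', Real.rpow_nonneg hu.le]
  · have hset : {v | u < v * x} = Set.Ioi (u / x) := by
      ext v; simp [div_lt_iff₀ hx]
    rw [hset, vLaw_Ioi hβ (by positivity), ← ENNReal.ofReal_mul (by positivity),
      Real.div_rpow hu.le hx.le]
    have : 0 < x ^ β := Real.rpow_pos_of_pos hx β
    congr 1
    field_simp

lemma powerBias_eq_withDensity {β : ℝ} {μ : Measure ℝ} (hmom : ∫ x, x ^ β ∂μ = 1) :
    powerBias β μ = μ.withDensity fun x => ENNReal.ofReal (x ^ β) := by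
  simp [powerBias, hmom]

lemma eqLaw_Ioi {β : ℝ} (hβ : 0 < β) {μ : Measure ℝ} [IsProbabilityMeasure μ]
    (hsupp : μ (Set.Iio 0) = 0) (hint : Integrable (fun x => x ^ β) μ)
    (hmom : ∫ x, x ^ β ∂μ = 1) {u : ℝ} (hu : 0 < u) :
    eqLaw β β μ (Set.Ioi u) = ENNReal.ofReal (stopLoss μ (· ^ β) (u ^ β)) := by
  have hmul : Measurable fun q : ℝ × ℝ => q.1 * q.2 := measurable_fst.mul measurable_snd
  have hdens : Measurable fun x : ℝ => ENNReal.ofReal (x ^ β) :=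
    (measurable_id.pow_const β).ennreal_ofReal
  rw [eqLaw, Measure.map_apply hmul measurableSet_Ioi, powerBias_eq_withDensity hmom,
    Measure.prod_apply_symm (hmul measurableSet_Ioi),
    lintegral_withDensity_eq_lintegral_mul_non_measurable _ hdens
      (.of_forall fun _ => ENNReal.ofReal_lt_top),
    stopLoss, ofReal_integral_eq_lintegral_ofReal (integrable_max_sub_const hint _)
      (.of_forall fun _ => le_max_right _ _)]
  refine lintegral_congr_ae ((ae_le_of_measure_Iio_eq_zero hsupp).mono fun x hx => ?_)
  simp only [Pi.mul_apply, ENNReal.ofReal_max, ENNReal.ofReal_zero, max_eq_left zero_le]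
  exact ofReal_rpow_mul_vLaw hβ hu hx

section EquilibriumDomination

variable {β p : ℝ} {μ : Measure ℝ} [IsProbabilityMeasure μ]

lemma mul_stopLoss_le_measureReal (hβ : 0 < β) (hp : 0 < p)
    (hsupp : μ (Set.Iio 0) = 0) (hint : Integrable (fun x => x ^ β) μ)
    (hmom : ∫ x, x ^ β ∂μ = 1)
    (hstar : ∀ t, 0 < t → (eqLaw β β μ (Set.Ioi t)).toReal ≤ μ.real (Set.Ioi t) / p)
    {w : ℝ} (hw : 0 < w) :
    p * stopLoss μ (· ^ β) w ≤ μ.real {x | w ≤ x ^ β} := by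
  set t := w ^ β⁻¹
  have ht : 0 < t := Real.rpow_pos_of_pos hw _
  have htw : t ^ β = w := Real.rpow_inv_rpow hw.le hβ.ne'
  have hdom := hstar t ht
  rw [eqLaw_Ioi hβ hsupp hint hmom ht, ENNReal.toReal_ofReal (stopLoss_nonneg _), htw,
    le_div_iff₀ hp, mul_comm] at hdom
  refine hdom.trans (measureReal_mono fun x (hx : t < x) => ?_)
  exact htw ▸ Real.rpow_le_rpow ht.le hx.le hβ.le

lemma stopLoss_rpow_le_exp (hβ : 0 < β) (hp : 0 < p)
    (hsupp : μ (Set.Iio 0) = 0) (hint : Integrable (fun x => x ^ β) μ)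
    (hmom : ∫ x, x ^ β ∂μ = 1)
    (hstar : ∀ t, 0 < t → (eqLaw β β μ (Set.Ioi t)).toReal ≤ μ.real (Set.Ioi t) / p)
    {v : ℝ} (hv : 0 < v) :
    stopLoss μ (· ^ β) v ≤ Real.exp (-(p * v)) := by
  have hrec : ∀ v δ, 0 ≤ v → 0 < δ →
      stopLoss μ (· ^ β) (v + δ) * (1 + p * δ) ≤ stopLoss μ (· ^ β) v := by
    intro v δ hv hδ
    have hmarkov := sub_mul_measureReal_add_stopLoss_le (Y := (· ^ β))
      (measurable_id.pow_const β) hint (le_add_of_nonneg_right (a := v) hδ.le)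
    have hdom := mul_stopLoss_le_measureReal hβ hp hsupp hint hmom hstar (w := v + δ)
      (by positivity)
    rw [add_sub_cancel_left] at hmarkov
    linarith [mul_le_mul_of_nonneg_left hdom hδ.le]
  have hnonneg : 0 ≤ᵐ[μ] fun x => x ^ β :=
    (ae_le_of_measure_Iio_eq_zero hsupp).mono fun x hx => Real.rpow_nonneg hx β
  have := mul_exp_le_of_mul_one_add_le hp.le hrec hv
  rwa [stopLoss_zero hnonneg, hmom, ← le_div_iff₀ (Real.exp_pos _), one_div,
    ← Real.exp_neg] at this

end EquilibriumDomination

/-- Upper tail bound in the `α = β` case: if `E[X^β] = 1` and `X* ⪯_p X`,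
then `P[X ≥ t] ≤ exp(1 - p t^β)` for all `t > 0`. -/
theorem stmt9 (μ : Measure ℝ) [IsProbabilityMeasure μ] (β p : ℝ)
    (hβ : 0 < β) (hp : 0 < p) (hp1 : p ≤ 1)
    (hsupp : μ (Set.Iio 0) = 0)
    (hint : Integrable (fun x => x ^ β) μ)
    (hmom : ∫ x, x ^ β ∂μ = 1)
    (hstar : ∀ t : ℝ, (eqLaw β β μ {x | t < x}).toReal ≤ (μ {x | t < x}).toReal / p) :
    ∀ t : ℝ, 0 < t → (μ (Set.Ici t)).toReal ≤ Real.exp (1 - p * t ^ β) := by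
  intro t ht
  rw [← measureReal_def]
  rcases le_or_gt (p * t ^ β) 1 with hsmall | hlarge
  · exact measureReal_le_one.trans (Real.one_le_exp (by linarith))
  set v := t ^ β - 1 / p with hv_def
  have hv : 0 < v := by rw [sub_pos, div_lt_iff₀ hp, mul_comm]; exact hlarge
  have hmarkov := sub_mul_measureReal_add_stopLoss_le (Y := (· ^ β))
    (measurable_id.pow_const β) hint (sub_le_self (t ^ β) (one_div_pos.2 hp).le)
  rw [sub_sub_cancel, one_div_mul_eq_div] at hmarkov
  have hdecay : stopLoss μ (· ^ β) v ≤ Real.exp (1 - p * t ^ β) := by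
    refine (stopLoss_rpow_le_exp hβ hp hsupp hint hmom (fun s _ => hstar s) hv).trans_eq ?_
    rw [hv_def]; field_simp; ring_nf
  calc μ.real (Set.Ici t) ≤ μ.real {x | t ^ β ≤ x ^ β} :=
        measureReal_mono fun x (hx : t ≤ x) => Real.rpow_le_rpow ht.le hx hβ.le
    _ ≤ p * stopLoss μ (· ^ β) v := by
        rw [← div_le_iff₀' hp]
        linarith [stopLoss_nonneg (μ := μ) (Y := (· ^ β)) (t ^ β)]
    _ ≤ p * Real.exp (1 - p * t ^ β) := by gcongr
    _ ≤ Real.exp (1 - p * t ^ β) := mul_le_of_le_one_left (Real.exp_pos _).le hp1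
end

section
/- In the generalized Pólya urn with white-ball count Nₙ and total count Bₙ (strictly increasing, B₀ = b+w), writing qₙ(k) = P[Nₙ = k], for all n ≥ 0 and all k: (Bₙ − k)·qₙ(k)² − (Bₙ − k − 1)·qₙ(k−1)·qₙ(k+1) − qₙ(k−1)·qₙ(k) ≥ 0. -/
/-!
Write `T_B p (k) = (k-1)/B · p(k-1) + (1 - k/B) · p(k)`, so that `q_{n+1} = T_{B_n} q_n`, and
`G_x(p, k)` for the quantity of the theorem with `B_n` replaced by `x`. By induction, `p = q_n`
is nonnegative with support an integer interval inside `[1, B_n - 1]`, is log-concave, and has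
`G_{B_n}(p, ·) ≥ 0`. Since `G_x(p, k)` grows in `x` at rate `p(k)² - p(k-1) p(k+1) ≥ 0`, only
`B_{n+1} = B_n + 1` matters. Two polynomial identities then carry the induction:
`B² (T_k² - T_{k-1} T_{k+1})` is a nonnegative combination of `(p(k-1) - p(k))²`, the
log-concavity defects at `k - 1` and `k`, and `p(k-1) p(k) - p(k-2) p(k+1)`; and
`p(k-1) · B² · G_{B+1}(T_B p, k)` is a nonnegative combination of `G_B(p, k)` and `G_B(p, k-1)`.
-/

open Function

noncomputable def urnStep (B : ℝ) (p : ℤ → ℝ) (k : ℤ) : ℝ :=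
  (k - 1) / B * p (k - 1) + (1 - k / B) * p k

def urnGap (x : ℝ) (p : ℤ → ℝ) (k : ℤ) : ℝ :=
  (x - k) * p k ^ 2 - (x - k - 1) * p (k - 1) * p (k + 1) - p (k - 1) * p k

theorem urnGap_add (x d : ℝ) (p : ℤ → ℝ) (k : ℤ) :
    urnGap (x + d) p k = urnGap x p k + d * (p k ^ 2 - p (k - 1) * p (k + 1)) := by
  unfold urnGap; ring

theorem urnGap_mono {x y : ℝ} {p : ℤ → ℝ} {k : ℤ} (hlc : p (k - 1) * p (k + 1) ≤ p k ^ 2)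
    (hxy : x ≤ y) : urnGap x p k ≤ urnGap y p k := by
  rw [show y = x + (y - x) by ring, urnGap_add]
  nlinarith

theorem urnGap_eq_of_apply_sub_one_eq_zero (x : ℝ) {p : ℤ → ℝ} {k : ℤ} (h : p (k - 1) = 0) :
    urnGap x p k = (x - k) * p k ^ 2 := by
  simp [urnGap, h]

theorem urnGap_eq_zero_of_apply_eq_zero (x : ℝ) {p : ℤ → ℝ} {k : ℤ} (h₀ : p k = 0)
    (h₁ : p (k + 1) = 0) : urnGap x p k = 0 := by
  simp [urnGap, h₀, h₁]

theorem urnStep_eq_zero (B : ℝ) {p : ℤ → ℝ} {k : ℤ} (h₁ : p (k - 1) = 0) (h₀ : p k = 0) :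
    urnStep B p k = 0 := by
  simp [urnStep, h₁, h₀]

theorem mul_le_mul_of_logConcave {p : ℤ → ℝ} (h0 : ∀ k, 0 ≤ p k)
    (hs : (support p).OrdConnected) (hlc : ∀ k, p (k - 1) * p (k + 1) ≤ p k ^ 2) (k : ℤ) :
    p (k - 2) * p (k + 1) ≤ p (k - 1) * p k := by
  rcases (h0 (k - 2)).eq_or_lt with ha | ha
  · rw [← ha, zero_mul]; exact mul_nonneg (h0 _) (h0 _)
  rcases (h0 (k + 1)).eq_or_lt with he | he
  · rw [← he, mul_zero]; exact mul_nonneg (h0 _) (h0 _)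
  have hmem : ∀ j ∈ Set.Icc (k - 2) (k + 1), 0 < p j := fun j hj =>
    (h0 j).lt_of_ne' (hs.out ha.ne' he.ne' hj)
  have hc := hmem (k - 1) ⟨by omega, by omega⟩
  have hd := hmem k ⟨by omega, by omega⟩
  have hlc₁ := hlc (k - 1)
  rw [show k - 1 - 1 = k - 2 by ring, sub_add_cancel] at hlc₁
  have key : p (k - 2) * p (k + 1) * (p (k - 1) * p k) ≤ p (k - 1) * p k * (p (k - 1) * p k) := by
    nlinarith [mul_le_mul hlc₁ (hlc k) (mul_nonneg hc.le he.le) (sq_nonneg _)]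
  exact le_of_mul_le_mul_right key (mul_pos hc hd)

theorem urnStep_sq_sub_mul {B : ℝ} (hB : B ≠ 0) (p : ℤ → ℝ) (k : ℤ) :
    B ^ 2 * (urnStep B p k ^ 2 - urnStep B p (k - 1) * urnStep B p (k + 1)) =
      (p (k - 1) - p k) ^ 2 + k * (k - 2) * (p (k - 1) ^ 2 - p (k - 2) * p k)
        + (k - 2) * (B - k - 1) * (p (k - 1) * p k - p (k - 2) * p (k + 1))
        + ((B - k) ^ 2 - 1) * (p k ^ 2 - p (k - 1) * p (k + 1)) := by
  simp only [urnStep, sub_sub, add_sub_cancel_right, show (1 : ℤ) + 1 = 2 by rfl]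
  push_cast
  field_simp
  ring

theorem mul_urnGap_urnStep {B : ℝ} (hB : B ≠ 0) (p : ℤ → ℝ) (k : ℤ) :
    p (k - 1) * (B ^ 2 * urnGap (B + 1) (urnStep B p) k) =
      ((B - k) * (B - k + 1) * p (k - 1) + (B - k) * (k - 2) * p (k - 2)) * urnGap B p k
        + ((k - 1) * (k - 2) * p (k - 1) + (B - k) * (k - 2) * p k) * urnGap B p (k - 1) := by
  simp only [urnGap, urnStep, sub_sub, add_sub_cancel_right, sub_add_cancel,
    show (1 : ℤ) + 1 = 2 by rfl]
  push_cast
  field_simp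
  ring

structure IsUrnProfile (B : ℝ) (p : ℤ → ℝ) : Prop where
  nonneg : ∀ k, 0 ≤ p k
  ordConnected_support : (support p).OrdConnected
  support_subset : ∀ k, p k ≠ 0 → 1 ≤ (k : ℝ) ∧ (k : ℝ) + 1 ≤ B
  logConcave : ∀ k, p (k - 1) * p (k + 1) ≤ p k ^ 2
  urnGap_nonneg : ∀ k, 0 ≤ urnGap B p k

namespace IsUrnProfile

variable {B : ℝ} {p : ℤ → ℝ}

theorem single {w : ℤ} (hw : 1 ≤ w) (hB : (w : ℝ) + 1 ≤ B) : IsUrnProfile B (Pi.single w 1) where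
  nonneg k := by rw [Pi.single_apply]; split_ifs <;> norm_num
  ordConnected_support := by
    rw [Pi.support_single_of_ne one_ne_zero]; exact Set.ordConnected_singleton
  support_subset k hk := by
    obtain rfl : k = w := by by_contra h; exact hk (Pi.single_eq_of_ne h 1)
    exact ⟨by exact_mod_cast hw, hB⟩
  logConcave k := by
    simp only [Pi.single_apply]
    split_ifs <;> first | omega | norm_num
  urnGap_nonneg k := by
    simp only [urnGap, Pi.single_apply]
    split_ifs <;> first | omega | (subst_vars; linarith)

theorem urnStep_nonneg (hp : IsUrnProfile B p) (hB : 0 < B) (k : ℤ) : 0 ≤ urnStep B p k := by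
  have h₁ : 0 ≤ (k - 1 : ℝ) / B * p (k - 1) := by
    rcases eq_or_ne (p (k - 1)) 0 with h | h
    · simp [h]
    · have := (hp.support_subset _ h).1
      push_cast at this
      exact mul_nonneg (div_nonneg (by linarith) hB.le) (hp.nonneg _)
  have h₀ : 0 ≤ (1 - k / B) * p k := by
    rcases eq_or_ne (p k) 0 with h | h
    · simp [h]
    · have := (hp.support_subset _ h).2
      exact mul_nonneg (by rw [sub_nonneg, div_le_one hB]; linarith) (hp.nonneg _)
  exact add_nonneg h₁ h₀

theorem urnStep_support_subset (hp : IsUrnProfile B p) (k : ℤ) (hk : urnStep B p k ≠ 0) :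
    1 ≤ (k : ℝ) ∧ (k : ℝ) ≤ B := by
  by_cases h : p k = 0
  · have h₁ : p (k - 1) ≠ 0 := fun h₁ => hk (urnStep_eq_zero B h₁ h)
    obtain ⟨hlo, hhi⟩ := hp.support_subset _ h₁
    push_cast at hlo hhi
    constructor <;> linarith
  · obtain ⟨hlo, hhi⟩ := hp.support_subset _ h
    constructor <;> linarith

theorem ordConnected_support_urnStep (hp : IsUrnProfile B p) (hB : 0 < B) :
    (support (urnStep B p)).OrdConnected := by
  have hsupp : ∀ j, urnStep B p j ≠ 0 → ∃ j' ∈ Set.Icc (j - 1) j, p j' ≠ 0 := fun j hj => by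
    by_cases h : p j = 0
    · exact ⟨j - 1, ⟨le_rfl, by omega⟩, fun h₁ => hj (urnStep_eq_zero B h₁ h)⟩
    · exact ⟨j, ⟨by omega, le_rfl⟩, h⟩
  refine ⟨fun i hi j hj k ⟨hik, hkj⟩ => ?_⟩
  rcases hik.eq_or_lt with rfl | hik
  · exact hi
  rcases hkj.eq_or_lt with rfl | hkj
  · exact hj
  obtain ⟨i', ⟨-, hi'⟩, hpi'⟩ := hsupp i hi
  obtain ⟨j', ⟨hj', -⟩, hpj'⟩ := hsupp j hj
  have hk : 0 < p k :=
    (hp.nonneg k).lt_of_ne' (hp.ordConnected_support.out hpi' hpj' ⟨by omega, by omega⟩)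
  have hkB := (hp.support_subset k hk.ne').2
  have hlo : (1 : ℝ) ≤ i := (hp.urnStep_support_subset i hi).1
  have hik' : (i : ℝ) + 1 ≤ k := by exact_mod_cast hik
  have h₁ : 0 ≤ (k - 1 : ℝ) / B * p (k - 1) :=
    mul_nonneg (div_nonneg (by linarith) hB.le) (hp.nonneg _)
  have h₀ : 0 < (1 - k / B) * p k :=
    mul_pos (by rw [sub_pos, div_lt_one hB]; linarith) hk
  exact (add_pos_of_nonneg_of_pos h₁ h₀).ne'

theorem logConcave_urnStep (hp : IsUrnProfile B p) (hB : 0 < B) (k : ℤ) :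
    urnStep B p (k - 1) * urnStep B p (k + 1) ≤ urnStep B p k ^ 2 := by
  rcases eq_or_ne (urnStep B p (k - 1)) 0 with h | hm
  · rw [h, zero_mul]; positivity
  rcases eq_or_ne (urnStep B p (k + 1)) 0 with h | hp'
  · rw [h, mul_zero]; positivity
  have hk : (2 : ℝ) ≤ k := by
    have := (hp.urnStep_support_subset _ hm).1; push_cast at this; linarith
  have hkB : (k : ℝ) + 1 ≤ B := by
    have := (hp.urnStep_support_subset _ hp').2; push_cast at this; linarith
  have hlc₁ : 0 ≤ p (k - 1) ^ 2 - p (k - 2) * p k := by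
    have := hp.logConcave (k - 1)
    rw [show k - 1 - 1 = k - 2 by ring, sub_add_cancel] at this
    linarith
  have hlc₂ : 0 ≤ p (k - 1) * p k - p (k - 2) * p (k + 1) :=
    sub_nonneg.2 (mul_le_mul_of_logConcave hp.nonneg hp.ordConnected_support hp.logConcave k)
  have hlc₃ : 0 ≤ p k ^ 2 - p (k - 1) * p (k + 1) := sub_nonneg.2 (hp.logConcave k)
  have : 0 ≤ B ^ 2 * (urnStep B p k ^ 2 - urnStep B p (k - 1) * urnStep B p (k + 1)) := by
    rw [urnStep_sq_sub_mul hB.ne' p k]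
    have hk₂ : (0 : ℝ) ≤ k - 2 := by linarith
    have hBk : (0 : ℝ) ≤ (B - k) ^ 2 - 1 := by nlinarith
    exact add_nonneg (add_nonneg (add_nonneg (sq_nonneg _)
      (mul_nonneg (mul_nonneg (by linarith) hk₂) hlc₁))
      (mul_nonneg (mul_nonneg hk₂ (by linarith)) hlc₂)) (mul_nonneg hBk hlc₃)
  exact sub_nonneg.1 (nonneg_of_mul_nonneg_right this (by positivity))

theorem urnGap_urnStep_nonneg (hp : IsUrnProfile B p) (hB : 0 < B) (k : ℤ) :
    0 ≤ urnGap (B + 1) (urnStep B p) k := by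
  rcases (hp.nonneg (k - 1)).eq_or_lt with hc | hc
  · -- `p` vanishes at `k - 1`, so its support lies on one side of `k - 1`
    by_cases ha : p (k - 2) = 0
    · have hm : urnStep B p (k - 1) = 0 :=
        urnStep_eq_zero B (by rwa [show k - 1 - 1 = k - 2 by ring]) hc.symm
      rw [urnGap_eq_of_apply_sub_one_eq_zero _ hm]
      rcases eq_or_ne (urnStep B p k) 0 with h | h
      · simp [h]
      · have := (hp.urnStep_support_subset k h).2
        exact mul_nonneg (by linarith) (sq_nonneg _)
    · have hout : ∀ j, k ≤ j → p j = 0 := fun j hj => by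
        by_contra hj'
        have hmem : k - 1 ∈ Set.Icc (k - 2) j := ⟨by omega, by omega⟩
        exact hp.ordConnected_support.out ha hj' hmem hc.symm
      exact (urnGap_eq_zero_of_apply_eq_zero _ (urnStep_eq_zero B hc.symm (hout k le_rfl))
        (urnStep_eq_zero B (by simpa using hout k le_rfl) (hout (k + 1) (by omega)))).ge
  · have hk := hp.support_subset _ hc.ne'
    push_cast at hk
    have hM₁ : 0 ≤ (B - k) * (B - k + 1) * p (k - 1) + (B - k) * (k - 2) * p (k - 2) :=
      add_nonneg (mul_nonneg (mul_nonneg (by linarith) (by linarith)) hc.le)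
        (mul_nonneg (mul_nonneg (by linarith) (by linarith)) (hp.nonneg _))
    have hM₂ : 0 ≤ (k - 1) * (k - 2) * p (k - 1) + (B - k) * (k - 2) * p k :=
      add_nonneg (mul_nonneg (mul_nonneg (by linarith) (by linarith)) hc.le)
        (mul_nonneg (mul_nonneg (by linarith) (by linarith)) (hp.nonneg _))
    have : 0 ≤ p (k - 1) * (B ^ 2 * urnGap (B + 1) (urnStep B p) k) := by
      rw [mul_urnGap_urnStep hB.ne' p k]
      exact add_nonneg (mul_nonneg hM₁ (hp.urnGap_nonneg k)) (mul_nonneg hM₂ (hp.urnGap_nonneg _))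
    exact nonneg_of_mul_nonneg_right (nonneg_of_mul_nonneg_right this hc) (by positivity)

theorem step (hp : IsUrnProfile B p) (hB : 0 < B) {B' : ℝ} (hB' : B + 1 ≤ B') :
    IsUrnProfile B' (urnStep B p) where
  nonneg := hp.urnStep_nonneg hB
  ordConnected_support := hp.ordConnected_support_urnStep hB
  support_subset k hk := by
    obtain ⟨hlo, hhi⟩ := hp.urnStep_support_subset k hk
    exact ⟨hlo, by linarith⟩
  logConcave := hp.logConcave_urnStep hB
  urnGap_nonneg k :=
    (hp.urnGap_urnStep_nonneg hB k).trans (urnGap_mono (hp.logConcave_urnStep hB k) hB')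

end IsUrnProfile

/-- Auxiliary log-concavity variant for the generalized Pólya urn:
`(Bₙ - k)·qₙ(k)² - (Bₙ - k - 1)·qₙ(k-1)·qₙ(k+1) - qₙ(k-1)·qₙ(k) ≥ 0`. -/
theorem stmt18 (b w : ℕ) (hb : 1 ≤ b) (hw : 1 ≤ w) (B : ℕ → ℕ) (hB : StrictMono B)
    (hB0 : B 0 = b + w) (q : ℕ → ℤ → ℝ)
    (hq0 : ∀ k : ℤ, q 0 k = if k = (w : ℤ) then 1 else 0)
    (hrec : ∀ n : ℕ, ∀ k : ℤ,
      q (n + 1) k = ((k : ℝ) - 1) / (B n) * q n (k - 1) + (1 - (k : ℝ) / (B n)) * q n k) :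
    ∀ n : ℕ, ∀ k : ℤ,
      0 ≤ ((B n : ℝ) - k) * (q n k) ^ 2 - ((B n : ℝ) - k - 1) * q n (k - 1) * q n (k + 1)
            - q n (k - 1) * q n k := by
  have hprofile : ∀ n, IsUrnProfile (B n) (q n) := by
    intro n
    induction n with
    | zero =>
      have hq : q 0 = Pi.single (w : ℤ) 1 := funext fun k => by rw [hq0, Pi.single_apply]
      have hwB : w + 1 ≤ B 0 := by omega
      rw [hq]
      exact IsUrnProfile.single (by exact_mod_cast hw) (by exact_mod_cast hwB)
    | succ n ih =>
      have hpos : (0 : ℝ) < B n := by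
        have := hB.monotone (Nat.zero_le n); exact_mod_cast (by omega : 0 < B n)
      have hlt : (B n : ℝ) + 1 ≤ B (n + 1) := by exact_mod_cast hB (Nat.lt_succ_self n)
      rw [show q (n + 1) = urnStep (B n) (q n) from funext (hrec n)]
      exact ih.step hpos hlt
  exact fun n => (hprofile n).urnGap_nonneg
end
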